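/- Let f₀, f₁ ∈ PL₀(I) satisfy the relations [f₀f₁⁻¹, f₀⁻¹f₁f₀] = 1 and [f₀f₁⁻¹, f₀⁻²f₁f₀²] = 1. If A is an orbital of f₀, then either A contains some orbital B of f₁ with B ⊆ A, or A is disjoint from the support of f₁. In particular no orbital of f₀ is properly contained in an orbital of f₁. -/

import Mathlib

/-- The support of a permutation `f` of `ℝ` : the set of points moved by `f`. -/
def Supp (f : Equiv.Perm ℝ) : Set ℝ := {x : ℝ | f x ≠ x}

/-- `IsPL0 f` says that `f` is (the extension by the identity on `ℝ \ [0,1]` of) a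
piecewise-linear orientation-preserving homeomorphism of the unit interval `[0,1]`
with only finitely many breakpoints; this represents membership in `PL₀(I)`.
The finite set `B` collects the possible points of non-differentiability: away from
`B` the map is locally affine. -/
def IsPL0 (f : Equiv.Perm ℝ) : Prop :=
  StrictMono ⇑f ∧ (∀ x : ℝ, x ≤ 0 → f x = x) ∧ (∀ x : ℝ, 1 ≤ x → f x = x) ∧
    ∃ B : Finset ℝ, ∀ x : ℝ, x ∉ B → ∃ s t : ℝ, ∀ᶠ y in nhds x, f y = s * y + t

/-- `IsOrbital f a b` : the open interval `(a,b)` is an orbital of `f`, i.e. a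
connected component of `Supp f` (an open interval contained in the support whose
endpoints are fixed by `f`). -/
def IsOrbital (f : Equiv.Perm ℝ) (a b : ℝ) : Prop :=
  a < b ∧ Set.Ioo a b ⊆ Supp f ∧ f a = a ∧ f b = b

open scoped commutatorElement

/-- The two defining relations `[f₀f₁⁻¹, f₁^{f₀}] = 1` and `[f₀f₁⁻¹, f₁^{f₀²}] = 1`
of Thompson's group `F`, for the pair `(f₀, f₁)`.  The paper composes in word order
(functions act on the right), so the paper's word `f₀f₁⁻¹` is the group element
`f₁⁻¹ * f₀` in Mathlib's left-action convention, and the conjugate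
`f₁^{f₀} = f₀⁻¹f₁f₀` is the element `f₀ * f₁ * f₀⁻¹`.  Recall `⁅a,b⁆ = 1 ↔ a*b = b*a`. -/
def ThompsonRel (f₀ f₁ : Equiv.Perm ℝ) : Prop :=
  ⁅f₁⁻¹ * f₀, f₀ * f₁ * f₀⁻¹⁆ = 1 ∧ ⁅f₁⁻¹ * f₀, f₀ ^ 2 * f₁ * (f₀ ^ 2)⁻¹⁆ = 1

open Set Filter Topology

/-!
Put `g = f₁⁻¹f₀`; the relations say that `g` commutes with `f₀f₁f₀⁻¹` and with `f₀²f₁f₀⁻²`.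
Suppose the left endpoint `a` of an orbital of `f₀` lies in an orbital `(b, d)` of `f₁` (the right
endpoint reduces to this under the reflection `x ↦ 1 - x`). Two rigidity facts about PL maps
drive the argument. An increasing bijection commuting with a PL map `h` permutes the finitely
many orbitals of `h` in an order-preserving way, so it fixes their endpoints. A PL map commuting with `h` on an
orbital of `h` and fixing one point of it is the identity there: it fixes an `h`-orbit
accumulating at an endpoint, hence is the identity on the last affine piece before that endpoint,
and this spreads back along `h`-orbits.

Since `g a = f₁⁻¹a ≠ a`, the orbitals `(f₀b, f₀d)` and `(f₀²b, f₀²d)` of the two conjugates of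
`f₁`, which both contain `a`, must coincide, so `f₀` fixes `b` and `d`. Then `p = f₀⁻¹gf₀`
commutes with `f₁` and moves `a`, so `(b, d)` is an orbital of `p`. Near `d` from the left, PL
maps fixing `d` are linear about `d`, so `f₀` and `p` commute there; as `p⁻¹f₀⁻¹pf₀` commutes
with `f₁`, they commute on all of `(b, d)`. Finally `f₀` fixes `a ∈ (b, d)`, so it is the
identity on `(b, d)`, which contains points of the orbital of `f₀` starting at `a`.
-/

theorem Set.Ioo_subset_Ioo_of_notMem {α : Type*} [LinearOrder α] {a b c d x : α}
    (ha : a ∉ Ioo b d) (hc : c ∉ Ioo b d) (hx : x ∈ Ioo a c) (hx' : x ∈ Ioo b d) :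
    Ioo b d ⊆ Ioo a c :=
  Ioo_subset_Ioo (not_lt.1 fun h => ha ⟨h, hx.1.trans hx'.2⟩)
    (not_lt.1 fun h => hc ⟨hx'.1.trans hx.2, h⟩)

theorem Set.endpoints_eq_of_mem_Ioo {α : Type*} [LinearOrder α] {P : α → Prop}
    {b₁ d₁ b₂ d₂ x : α} (hb₁ : P b₁) (hd₁ : P d₁) (hb₂ : P b₂) (hd₂ : P d₂)
    (h₁ : ∀ y ∈ Ioo b₁ d₁, ¬P y) (h₂ : ∀ y ∈ Ioo b₂ d₂, ¬P y)
    (hx₁ : x ∈ Ioo b₁ d₁) (hx₂ : x ∈ Ioo b₂ d₂) : b₁ = b₂ ∧ d₁ = d₂ :=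
  ⟨le_antisymm (not_lt.1 fun h => h₂ b₁ ⟨h, hx₁.1.trans hx₂.2⟩ hb₁)
      (not_lt.1 fun h => h₁ b₂ ⟨h, hx₂.1.trans hx₁.2⟩ hb₂),
    le_antisymm (not_lt.1 fun h => h₁ d₂ ⟨hx₁.1.trans hx₂.2, h⟩ hd₂)
      (not_lt.1 fun h => h₂ d₁ ⟨hx₂.1.trans hx₁.2, h⟩ hd₁)⟩

theorem Set.Finite.eqOn_id_of_strictMono_of_mapsTo {α : Type*} [LinearOrder α] {s : Set α}
    (hs : s.Finite) {f : α → α} (hf : StrictMono f) (hmaps : MapsTo f s s) : EqOn f id s := by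
  have := hs.to_subtype
  have hr : StrictMono (hmaps.restrict f s s) := fun _ _ h => hf h
  intro x hx
  exact congrArg Subtype.val (le_antisymm (hr.apply_le (x := ⟨x, hx⟩)) hr.le_apply)

theorem apply_iterate_eq_self_iff {α : Type*} {g k : α → α} {s : Set α}
    (hk : Function.Injective k) (hs : MapsTo k s s) (hc : ∀ x ∈ s, g (k x) = k (g x)) (n : ℕ)
    {x : α} (hx : x ∈ s) :
    g (k^[n] x) = k^[n] x ↔ g x = x := by
  induction n generalizing x with
  | zero => rfl
  | succ n ih =>
    rw [Function.iterate_succ_apply, ih (hs hx), hc x hx, hk.eq_iff]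

theorem Commute.perm_apply {α : Type*} {g h : Equiv.Perm α} (hc : Commute g h) (x : α) :
    g (h x) = h (g x) :=
  DFunLike.congr_fun hc.eq x

theorem Equiv.Perm.strictMono_inv {α : Type*} [LinearOrder α] {f : Equiv.Perm α}
    (hf : StrictMono f) : StrictMono ⇑f⁻¹ :=
  fun x y h => hf.lt_iff_lt.1 (by simpa using h)

theorem StrictMono.tendsto_nhdsLT_of_apply_eq {f : ℝ → ℝ} {z : ℝ} (hf : StrictMono f)
    (hc : ContinuousAt f z) (hz : f z = z) : Tendsto f (𝓝[<] z) (𝓝[<] z) := by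
  refine tendsto_nhdsWithin_iff.2 ⟨?_, eventually_nhdsWithin_of_forall fun x hx => ?_⟩
  · have := hc.tendsto
    rw [hz] at this
    exact this.mono_left nhdsWithin_le_nhds
  · exact (hf hx).trans_eq hz

def LocallyAffineAt (f : ℝ → ℝ) (x : ℝ) : Prop :=
  ∃ s t : ℝ, ∀ᶠ y in 𝓝 x, f y = s * y + t

namespace LocallyAffineAt

variable {f g : ℝ → ℝ} {x : ℝ}

theorem continuousAt (hf : LocallyAffineAt f x) : ContinuousAt f x := by
  obtain ⟨s, t, hst⟩ := hf
  exact (continuousAt_congr hst).2 (by fun_prop)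

theorem comp (hf : LocallyAffineAt f (g x)) (hg : LocallyAffineAt g x) :
    LocallyAffineAt (f ∘ g) x := by
  have hgc := hg.continuousAt
  obtain ⟨s, t, hst⟩ := hf
  obtain ⟨s', t', hst'⟩ := hg
  refine ⟨s * s', s * t' + t, ?_⟩
  filter_upwards [hst', hgc.eventually hst] with y h₁ h₂
  rw [Function.comp_apply, h₂, h₁]
  ring

theorem perm_inv {f : Equiv.Perm ℝ} (hf : LocallyAffineAt f (f⁻¹ x))
    (hc : ContinuousAt ⇑f⁻¹ x) : LocallyAffineAt ⇑f⁻¹ x := by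
  obtain ⟨s, t, hst⟩ := hf
  have hs : s ≠ 0 := by
    rintro rfl
    obtain ⟨y, hy, hne⟩ :=
      ((hst.filter_mono nhdsWithin_le_nhds).and self_mem_nhdsWithin).exists (f := 𝓝[≠] (f⁻¹ x))
    exact hne (f.injective (by rw [hy, hst.self_of_nhds]; ring))
  refine ⟨s⁻¹, -t / s, ?_⟩
  filter_upwards [hc.eventually hst] with y hy
  simp only [Equiv.Perm.coe_inv, Equiv.apply_symm_apply] at hy ⊢
  field_simp
  linarith

theorem exists_eqOn_Ioo {α β : ℝ} (h : ∀ x ∈ Ioo α β, LocallyAffineAt f x) :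
    ∃ s t : ℝ, EqOn f (fun x => s * x + t) (Ioo α β) := by
  rcases (Ioo α β).eq_empty_or_nonempty with he | ⟨x₀, hx₀⟩
  · exact ⟨0, 0, by simp [he]⟩
  -- slope and intercept, read off from the derivative, are locally constant on `(α, β)`
  let G : ℝ → ℝ × ℝ := fun y => (deriv f y, f y - deriv f y * y)
  have hG : ∀ s t y, (∀ᶠ z in 𝓝 y, f z = s * z + t) → G y = (s, t) := fun s t y hy => by
    have hd : deriv f y = s := by
      rw [Filter.EventuallyEq.deriv_eq (f := fun z => s * z + t) hy]
      simp
    simp [G, hd, hy.self_of_nhds]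
  have hloc : IsLocallyConstant (G ∘ Subtype.val : Ioo α β → ℝ × ℝ) := by
    refine (IsLocallyConstant.iff_eventually_eq _).2 fun ⟨x, hx⟩ => ?_
    obtain ⟨s, t, hst⟩ := h x hx
    filter_upwards [continuous_subtype_val.continuousAt.eventually hst.eventually_nhds] with y hy
    simp only [Function.comp_apply, hG s t _ hy, hG s t x hst]
  have := Subtype.preconnectedSpace (isPreconnected_Ioo (a := α) (b := β))
  refine ⟨(G x₀).1, (G x₀).2, fun x hx => ?_⟩
  have hx' := hloc.apply_eq_of_preconnectedSpace ⟨x, hx⟩ ⟨x₀, hx₀⟩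
  simp only [Function.comp_apply] at hx'
  rw [← hx']
  simp [G]

end LocallyAffineAt

theorem IsPL0.mul {f g : Equiv.Perm ℝ} (hf : IsPL0 f) (hg : IsPL0 g) : IsPL0 (f * g) := by
  obtain ⟨hfm, hf₀, hf₁, Bf, hBf⟩ := hf
  obtain ⟨hgm, hg₀, hg₁, Bg, hBg⟩ := hg
  refine ⟨hfm.comp hgm, fun x hx => ?_, fun x hx => ?_, Bg ∪ Bf.image ⇑g⁻¹, fun x hx => ?_⟩
  · simp [hg₀ x hx, hf₀ x hx]
  · simp [hg₁ x hx, hf₁ x hx]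
  · simp only [Finset.mem_union, Finset.mem_image, not_or, not_exists, not_and] at hx
    exact LocallyAffineAt.comp (f := f) (g := g) (hBf (g x) fun h => hx.2 _ h (by simp))
      (hBg x hx.1)

theorem IsPL0.inv {f : Equiv.Perm ℝ} (hf : IsPL0 f) : IsPL0 f⁻¹ := by
  obtain ⟨hfm, hf₀, hf₁, B, hB⟩ := hf
  refine ⟨Equiv.Perm.strictMono_inv hfm, fun x hx => ?_, fun x hx => ?_, B.image f,
    fun x hx => ?_⟩
  · rw [Equiv.Perm.inv_eq_iff_eq, hf₀ x hx]
  · rw [Equiv.Perm.inv_eq_iff_eq, hf₁ x hx]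
  · have hc : Continuous ⇑f⁻¹ :=
      (Equiv.Perm.strictMono_inv hfm).monotone.continuous_of_surjective f⁻¹.surjective
    refine LocallyAffineAt.perm_inv (hB _ fun h => hx ?_) hc.continuousAt
    exact Finset.mem_image.2 ⟨_, h, by simp⟩

def PL₀ : Subgroup (Equiv.Perm ℝ) where
  carrier := {f | IsPL0 f}
  one_mem' := ⟨strictMono_id, fun _ _ => rfl, fun _ _ => rfl, ∅, fun _ _ => ⟨1, 0, by simp⟩⟩
  mul_mem' := IsPL0.mul
  inv_mem' := IsPL0.inv

namespace PL₀

variable {f g : Equiv.Perm ℝ} {z : ℝ}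

theorem strictMono (hf : f ∈ PL₀) : StrictMono f := hf.1

theorem continuous (hf : f ∈ PL₀) : Continuous f :=
  hf.1.monotone.continuous_of_surjective f.surjective

theorem exists_eventually_affine_nhdsLT (hf : f ∈ PL₀) (z : ℝ) :
    ∃ s t : ℝ, ∀ᶠ x in 𝓝[<] z, f x = s * x + t := by
  obtain ⟨B, hB⟩ := hf.2.2.2
  have hBc : (↑B \ {z} : Set ℝ)ᶜ ∈ 𝓝 z :=
    B.finite_toSet.sdiff.isClosed.isOpen_compl.mem_nhds (by simp)
  have hev : ∀ᶠ x in 𝓝[<] z, x ∉ B := by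
    filter_upwards [nhdsWithin_le_nhds hBc, self_mem_nhdsWithin] with x h₁ h₂
    simpa [(show x < z from h₂).ne] using h₁
  obtain ⟨w, hw, hwB⟩ := mem_nhdsLT_iff_exists_Ioo_subset.1 hev
  obtain ⟨s, t, hst⟩ := LocallyAffineAt.exists_eqOn_Ioo fun x hx => hB x (hwB hx)
  exact ⟨s, t, mem_of_superset (Ioo_mem_nhdsLT hw) hst⟩

theorem exists_eventually_eq_nhdsLT (hf : f ∈ PL₀) (hz : f z = z) :
    ∃ s : ℝ, ∀ᶠ x in 𝓝[<] z, f x = z + s * (x - z) := by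
  obtain ⟨s, t, hst⟩ := exists_eventually_affine_nhdsLT hf z
  have hlim : Tendsto f (𝓝[<] z) (𝓝 z) :=
    ((PL₀.continuous hf).tendsto' z z hz).mono_left nhdsWithin_le_nhds
  have hzst : z = s * z + t := tendsto_nhds_unique (hlim.congr' hst)
    ((Continuous.tendsto (f := fun x => s * x + t) (by fun_prop) z).mono_left nhdsWithin_le_nhds)
  refine ⟨s, hst.mono fun x hx => ?_⟩
  rw [hx]
  linarith

theorem eventually_comm_nhdsLT (hf : f ∈ PL₀) (hg : g ∈ PL₀) (hfz : f z = z) (hgz : g z = z) :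
    ∀ᶠ x in 𝓝[<] z, f (g x) = g (f x) := by
  obtain ⟨s, hs⟩ := exists_eventually_eq_nhdsLT hf hfz
  obtain ⟨t, ht⟩ := exists_eventually_eq_nhdsLT hg hgz
  have hfl := (PL₀.strictMono hf).tendsto_nhdsLT_of_apply_eq (PL₀.continuous hf).continuousAt hfz
  have hgl := (PL₀.strictMono hg).tendsto_nhdsLT_of_apply_eq (PL₀.continuous hg).continuousAt hgz
  filter_upwards [hs, ht, hgl.eventually hs, hfl.eventually ht] with x h₁ h₂ h₃ h₄
  rw [h₃, h₄, h₁, h₂]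
  ring

end PL₀

namespace IsOrbital

variable {f : Equiv.Perm ℝ} {b d : ℝ}

theorem apply_ne (h : IsOrbital f b d) {x : ℝ} (hx : x ∈ Ioo b d) : f x ≠ x := h.2.1 hx

theorem eq_of_mem {b' d' x : ℝ} (h : IsOrbital f b d) (h' : IsOrbital f b' d')
    (hx : x ∈ Ioo b d) (hx' : x ∈ Ioo b' d') : b = b' ∧ d = d' :=
  endpoints_eq_of_mem_Ioo (P := fun y => f y = y) h.2.2.1 h.2.2.2 h'.2.2.1 h'.2.2.2
    (fun _ => h.apply_ne) (fun _ => h'.apply_ne) hx hx'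

theorem right_unique {d' : ℝ} (h : IsOrbital f b d) (h' : IsOrbital f b d') : d = d' :=
  le_antisymm (not_lt.1 fun hlt => h.apply_ne ⟨h'.1, hlt⟩ h'.2.2.2)
    (not_lt.1 fun hlt => h'.apply_ne ⟨h.1, hlt⟩ h.2.2.2)

theorem inv (h : IsOrbital f b d) : IsOrbital f⁻¹ b d :=
  ⟨h.1, fun _ hx hfx => h.apply_ne hx (Equiv.Perm.inv_eq_iff_eq.1 hfx).symm,
    Equiv.Perm.inv_eq_iff_eq.2 h.2.2.1.symm, Equiv.Perm.inv_eq_iff_eq.2 h.2.2.2.symm⟩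

theorem mapsTo (h : IsOrbital f b d) (hf : StrictMono f) : MapsTo f (Ioo b d) (Ioo b d) :=
  fun _ hx => ⟨h.2.2.1 ▸ hf hx.1, h.2.2.2 ▸ hf hx.2⟩

theorem conj (h : IsOrbital f b d) {σ : Equiv.Perm ℝ} (hσ : StrictMono σ) :
    IsOrbital (σ * f * σ⁻¹) (σ b) (σ d) := by
  have hσ' := Equiv.Perm.strictMono_inv hσ
  refine ⟨hσ h.1, fun x hx hfx => h.apply_ne (x := σ⁻¹ x) ⟨?_, ?_⟩ ?_, by simp [h.2.2.1],
    by simp [h.2.2.2]⟩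
  · simpa using hσ' hx.1
  · simpa using hσ' hx.2
  · simpa [← Equiv.eq_symm_apply] using hfx

theorem conj_of_strictAnti (h : IsOrbital f b d) {σ : Equiv.Perm ℝ} (hσ : StrictAnti σ) :
    IsOrbital (σ * f * σ⁻¹) (σ d) (σ b) := by
  have hσ' : StrictAnti ⇑σ⁻¹ := fun x y hxy => hσ.lt_iff_gt.1 (by simpa using hxy)
  refine ⟨hσ h.1, fun x hx hfx => h.apply_ne (x := σ⁻¹ x) ⟨?_, ?_⟩ ?_, by simp [h.2.2.2],
    by simp [h.2.2.1]⟩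
  · simpa using hσ' hx.2
  · simpa using hσ' hx.1
  · simpa [← Equiv.eq_symm_apply] using hfx

theorem exists_mem_of_locallyAffineAt (h : IsOrbital f b d) (hf : Continuous f) {B : Set ℝ}
    (hB : ∀ x ∉ B, LocallyAffineAt f x) : ∃ p ∈ B, p ∈ Ioo b d := by
  by_contra! hno
  obtain ⟨s, t, hst⟩ :=
    LocallyAffineAt.exists_eqOn_Ioo fun x hx => hB x fun hxB => hno x hxB hx
  have hIcc := hst.closure hf (by fun_prop)
  rw [closure_Ioo h.1.ne] at hIcc
  have hb : s * b + t = b := (hIcc (left_mem_Icc.2 h.1.le)).symm.trans h.2.2.1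
  have hd : s * d + t = d := (hIcc (right_mem_Icc.2 h.1.le)).symm.trans h.2.2.2
  have hs : s = 1 :=
    mul_right_cancel₀ (sub_ne_zero.2 h.1.ne) (by linarith : s * (b - d) = 1 * (b - d))
  have ht : t = 0 := by rw [hs] at hb; linarith
  obtain ⟨x, hx⟩ := nonempty_Ioo.2 h.1
  exact h.apply_ne hx (by rw [hst hx, hs, ht]; ring)

end IsOrbital

theorem exists_isOrbital_of_mem_Supp {f : Equiv.Perm ℝ} (hf : f ∈ PL₀) {x : ℝ}
    (hx : x ∈ Supp f) : ∃ b d : ℝ, IsOrbital f b d ∧ x ∈ Ioo b d := by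
  have hcl : IsClosed {y | f y = y} := isClosed_eq (PL₀.continuous hf) continuous_id
  have hx01 : x ∈ Ioo (0 : ℝ) 1 :=
    ⟨not_le.1 fun h => hx (hf.2.1 x h), not_le.1 fun h => hx (hf.2.2.1 x h)⟩
  set L := {y | f y = y} ∩ Iic x
  set R := {y | f y = y} ∩ Ici x
  have hL : sSup L ∈ L := (hcl.inter (isClosed_Iic (a := x))).csSup_mem
    ⟨0, hf.2.1 0 le_rfl, hx01.1.le⟩ ⟨x, fun _ hy => hy.2⟩
  have hR : sInf R ∈ R := (hcl.inter (isClosed_Ici (a := x))).csInf_mem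
    ⟨1, hf.2.2.1 1 le_rfl, hx01.2.le⟩ ⟨x, fun _ hy => hy.2⟩
  have hbx : sSup L < x := hL.2.lt_of_ne fun h => hx (h ▸ hL.1)
  have hxd : x < sInf R := hR.2.lt_of_ne' fun h => hx (h ▸ hR.1)
  refine ⟨sSup L, sInf R, ⟨hbx.trans hxd, fun y hy hfy => ?_, hL.1, hR.1⟩, hbx, hxd⟩
  rcases le_total y x with hyx | hxy
  · exact (le_csSup (s := L) ⟨x, fun _ h => h.2⟩ ⟨hfy, hyx⟩).not_gt hy.1
  · exact (csInf_le (s := R) ⟨x, fun _ h => h.2⟩ ⟨hfy, hxy⟩).not_gt hy.2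

theorem PL₀.finite_setOf_isOrbital {f : Equiv.Perm ℝ} (hf : f ∈ PL₀) :
    {b | ∃ d, IsOrbital f b d}.Finite := by
  obtain ⟨B, hB⟩ := hf.2.2.2
  have hsub : {b | ∃ d, IsOrbital f b d} ⊆
      ⋃ p ∈ (B : Set ℝ), {b | ∃ d, IsOrbital f b d ∧ p ∈ Ioo b d} := fun b ⟨d, h⟩ => by
    obtain ⟨p, hpB, hp⟩ := h.exists_mem_of_locallyAffineAt (PL₀.continuous hf) hB
    exact mem_biUnion hpB ⟨d, h, hp⟩
  refine (B.finite_toSet.biUnion fun p _ => Set.Subsingleton.finite ?_).subset hsub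
  rintro b ⟨d, h, hp⟩ b' ⟨d', h', hp'⟩
  exact (h.eq_of_mem h' hp hp').1

theorem IsOrbital.apply_eq_of_commute {f g : Equiv.Perm ℝ} {b d : ℝ} (h : IsOrbital f b d)
    (hf : f ∈ PL₀) (hg : StrictMono g) (hc : Commute g f) : g b = b ∧ g d = d := by
  have hconj : g * f * g⁻¹ = f := by rw [hc.eq, mul_inv_cancel_right]
  have hb : g b = b := (PL₀.finite_setOf_isOrbital hf).eqOn_id_of_strictMono_of_mapsTo hg
    (fun _ ⟨d', h'⟩ => ⟨g d', hconj ▸ h'.conj hg⟩) ⟨d, h⟩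
  have h' := h.conj hg
  rw [hconj, hb] at h'
  exact ⟨hb, (h.right_unique h').symm⟩

namespace IsOrbital

variable {h : Equiv.Perm ℝ} {b d : ℝ}

theorem tendsto_iterate (ho : IsOrbital h b d) (hh : StrictMono h) {x : ℝ} (hx : x ∈ Ioo b d)
    (hxh : x < h x) : Tendsto (fun n => h^[n] x) atTop (𝓝[<] d) := by
  have hmem : ∀ n, h^[n] x ∈ Ioo b d := fun n => (ho.mapsTo hh).iterate n hx
  have hbdd : BddAbove (range fun n => h^[n] x) :=
    ⟨d, forall_mem_range.2 fun n => (hmem n).2.le⟩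
  have hlim := tendsto_atTop_ciSup (hh.monotone.monotone_iterate_of_le_map hxh.le) hbdd
  -- the limit is a fixed point of `h` in `(b, d]`, hence it is `d`
  have hfix : h (⨆ n, h^[n] x) = ⨆ n, h^[n] x := isFixedPt_of_tendsto_iterate hlim
    (hh.monotone.continuous_of_surjective h.surjective).continuousAt
  have hsup : ⨆ n, h^[n] x = d :=
    le_antisymm (ciSup_le fun n => (hmem n).2.le)
      (not_lt.1 fun hlt => ho.apply_ne ⟨hx.1.trans_le (le_ciSup hbdd 0), hlt⟩ hfix)
  rw [hsup] at hlim
  exact tendsto_nhdsWithin_iff.2 ⟨hlim, Eventually.of_forall fun n => (hmem n).2⟩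

theorem exists_tendsto_of_commute (ho : IsOrbital h b d) (hh : StrictMono h) {g : ℝ → ℝ}
    (hc : ∀ y ∈ Ioo b d, g (h y) = h (g y)) {x : ℝ} (hx : x ∈ Ioo b d) :
    ∃ u : ℕ → ℝ, Tendsto u atTop (𝓝[<] d) ∧ ∀ n, g (u n) = u n ↔ g x = x := by
  rcases (ho.apply_ne hx).lt_or_gt with hxh | hxh
  · have hh' := Equiv.Perm.strictMono_inv hh
    have hc' : ∀ y ∈ Ioo b d, g (h⁻¹ y) = h⁻¹ (g y) := fun y hy => by
      have := hc _ (ho.inv.mapsTo hh' hy)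
      simp only [Equiv.Perm.coe_inv, Equiv.apply_symm_apply] at this ⊢
      rw [this, Equiv.symm_apply_apply]
    exact ⟨_, ho.inv.tendsto_iterate hh' hx (by simpa using hh' hxh),
      fun n => apply_iterate_eq_self_iff h⁻¹.injective (ho.inv.mapsTo hh') hc' n hx⟩
  · exact ⟨_, ho.tendsto_iterate hh hx hxh,
      fun n => apply_iterate_eq_self_iff h.injective (ho.mapsTo hh) hc n hx⟩

theorem eqOn_of_eventually_nhdsLT (ho : IsOrbital h b d) (hh : StrictMono h) {g : ℝ → ℝ}
    (hc : ∀ y ∈ Ioo b d, g (h y) = h (g y)) (hg : ∀ᶠ x in 𝓝[<] d, g x = x) :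
    EqOn g id (Ioo b d) := fun x hx => by
  obtain ⟨u, hu, hfix⟩ := ho.exists_tendsto_of_commute hh hc hx
  obtain ⟨n, hn⟩ := (hu.eventually hg).exists
  exact (hfix n).1 hn

theorem eqOn_of_apply_eq (ho : IsOrbital h b d) (hh : StrictMono h) {g : Equiv.Perm ℝ}
    (hg : g ∈ PL₀) (hc : ∀ y ∈ Ioo b d, g (h y) = h (g y)) {p : ℝ} (hp : p ∈ Ioo b d)
    (hgp : g p = p) : EqOn g id (Ioo b d) := by
  obtain ⟨u, hu, hfix⟩ := ho.exists_tendsto_of_commute hh hc hp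
  have hu' := hu.mono_right nhdsWithin_le_nhds
  have hgd : g d = d := tendsto_nhds_unique (((PL₀.continuous hg).tendsto d).comp hu')
    (hu'.congr fun n => ((hfix n).2 hgp).symm)
  obtain ⟨s, hs⟩ := PL₀.exists_eventually_eq_nhdsLT hg hgd
  obtain ⟨n, hn, hlt⟩ := (hu.eventually (hs.and self_mem_nhdsWithin)).exists
  have hs1 : s = 1 := mul_right_cancel₀ (sub_ne_zero.2 (ne_of_lt hlt))
    (by linarith [(hfix n).2 hgp] : s * (u n - d) = 1 * (u n - d))
  refine ho.eqOn_of_eventually_nhdsLT hh hc (hs.mono fun x hx => ?_)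
  rw [hx, hs1]
  ring

end IsOrbital

theorem ThompsonRel.conj {f₀ f₁ : Equiv.Perm ℝ} (hrel : ThompsonRel f₀ f₁)
    (σ : Equiv.Perm ℝ) : ThompsonRel (σ * f₀ * σ⁻¹) (σ * f₁ * σ⁻¹) := by
  have h₁ := congrArg (MulAut.conj σ) hrel.1
  have h₂ := congrArg (MulAut.conj σ) hrel.2
  simp only [map_commutatorElement, map_mul, map_inv, map_pow, map_one, MulAut.conj_apply]
    at h₁ h₂
  exact ⟨h₁, h₂⟩

theorem ThompsonRel.commute_conj {f₀ f₁ : Equiv.Perm ℝ} (hrel : ThompsonRel f₀ f₁) :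
    Commute (f₀⁻¹ * (f₁⁻¹ * f₀) * f₀) f₁ ∧
      Commute (f₀⁻¹ * (f₀⁻¹ * (f₁⁻¹ * f₀) * f₀) * f₀) f₁ := by
  have h₁ := (commutatorElement_eq_one_iff_commute.1 hrel.1).map (MulAut.conj f₀⁻¹)
  have h₂ := (commutatorElement_eq_one_iff_commute.1 hrel.2).map (MulAut.conj (f₀ ^ 2)⁻¹)
  simp only [MulAut.conj_apply] at h₁ h₂
  rw [show f₀⁻¹ * (f₀ * f₁ * f₀⁻¹) * f₀⁻¹⁻¹ = f₁ by group, inv_inv] at h₁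
  rw [show (f₀ ^ 2)⁻¹ * (f₀ ^ 2 * f₁ * (f₀ ^ 2)⁻¹) * (f₀ ^ 2)⁻¹⁻¹ = f₁ by group,
    show (f₀ ^ 2)⁻¹ * (f₁⁻¹ * f₀) * (f₀ ^ 2)⁻¹⁻¹ =
        f₀⁻¹ * (f₀⁻¹ * (f₁⁻¹ * f₀) * f₀) * f₀ by
      simp only [sq, mul_inv_rev, inv_inv, mul_assoc]] at h₂
  exact ⟨h₁, h₂⟩

theorem PL₀.conj_subLeft {f : Equiv.Perm ℝ} (hf : f ∈ PL₀) :
    Equiv.subLeft (1 : ℝ) * f * (Equiv.subLeft 1)⁻¹ ∈ PL₀ := by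
  obtain ⟨hfm, hf₀, hf₁, B, hB⟩ := hf
  have happ : ∀ x, (Equiv.subLeft (1 : ℝ) * f * (Equiv.subLeft 1)⁻¹ : Equiv.Perm ℝ) x =
      1 - f (1 - x) := fun x => by
    simp only [Equiv.Perm.mul_apply, Equiv.Perm.coe_inv, Equiv.subLeft_symm_apply,
      Equiv.subLeft_apply, neg_add_eq_sub]
  refine ⟨fun x y hxy => ?_, fun x hx => ?_, fun x hx => ?_, B.image (1 - ·), fun x hx => ?_⟩
  · rw [happ, happ]
    linarith [hfm (show 1 - y < 1 - x by linarith)]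
  · rw [happ, hf₁ _ (by linarith), sub_sub_cancel]
  · rw [happ, hf₀ _ (by linarith), sub_sub_cancel]
  · obtain ⟨s, t, hst⟩ :=
      hB (1 - x) fun h => hx (Finset.mem_image.2 ⟨_, h, sub_sub_cancel 1 x⟩)
    refine ⟨s, 1 - s - t, ?_⟩
    filter_upwards [(Continuous.tendsto (f := (1 - ·)) (by fun_prop) x).eventually hst]
      with y hy
    rw [happ, hy]
    ring

theorem IsOrbital.endpoints_eq_of_commute {g Y₁ Y₂ : Equiv.Perm ℝ} (hg : g ∈ PL₀)
    (hY₁ : Y₁ ∈ PL₀) (hY₂ : Y₂ ∈ PL₀) (hc₁ : Commute g Y₁) (hc₂ : Commute g Y₂)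
    {a b₁ d₁ b₂ d₂ : ℝ} (ho₁ : IsOrbital Y₁ b₁ d₁) (ho₂ : IsOrbital Y₂ b₂ d₂) (ha₁ : a ∈ Ioo b₁ d₁)
    (ha₂ : a ∈ Ioo b₂ d₂) (hga : g a ≠ a) : b₁ = b₂ ∧ d₁ = d₂ := by
  obtain ⟨hb₁, hd₁⟩ := ho₁.apply_eq_of_commute hY₁ (PL₀.strictMono hg) hc₁
  obtain ⟨hb₂, hd₂⟩ := ho₂.apply_eq_of_commute hY₂ (PL₀.strictMono hg) hc₂
  refine endpoints_eq_of_mem_Ioo (P := fun y => g y = y) hb₁ hd₁ hb₂ hd₂ ?_ ?_ ha₁ ha₂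
  · exact fun p hp hgp => hga (ho₁.eqOn_of_apply_eq (PL₀.strictMono hY₁) hg
      (fun y _ => hc₁.perm_apply y) hp hgp ha₁)
  · exact fun p hp hgp => hga (ho₂.eqOn_of_apply_eq (PL₀.strictMono hY₂) hg
      (fun y _ => hc₂.perm_apply y) hp hgp ha₂)

theorem ThompsonRel.fixes_endpoints_of_mem {f₀ f₁ : Equiv.Perm ℝ} (hrel : ThompsonRel f₀ f₁)
    (h₀ : f₀ ∈ PL₀) (h₁ : f₁ ∈ PL₀) {a b d : ℝ} (ha₀ : f₀ a = a) (ho₁ : IsOrbital f₁ b d)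
    (ha : a ∈ Ioo b d) : f₀ b = b ∧ f₀ d = d := by
  have hmem : ∀ σ : Equiv.Perm ℝ, σ ∈ PL₀ → σ a = a → a ∈ Ioo (σ b) (σ d) := fun σ hσ hσa =>
    ⟨hσa ▸ PL₀.strictMono hσ ha.1, hσa ▸ PL₀.strictMono hσ ha.2⟩
  have h₀₂ : f₀ ^ 2 ∈ PL₀ := pow_mem h₀ 2
  have ha₀₂ : (f₀ ^ 2) a = a := by simp [sq, ha₀]
  obtain ⟨hb, hd⟩ := IsOrbital.endpoints_eq_of_commute (mul_mem (inv_mem h₁) h₀)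
    (mul_mem (mul_mem h₀ h₁) (inv_mem h₀)) (mul_mem (mul_mem h₀₂ h₁) (inv_mem h₀₂))
    (commutatorElement_eq_one_iff_commute.1 hrel.1)
    (commutatorElement_eq_one_iff_commute.1 hrel.2)
    (ho₁.conj (PL₀.strictMono h₀)) (ho₁.conj (PL₀.strictMono h₀₂)) (hmem f₀ h₀ ha₀)
    (hmem _ h₀₂ ha₀₂) (by simpa [ha₀, Equiv.symm_apply_eq] using (ho₁.apply_ne ha).symm)
  simp only [sq, Equiv.Perm.mul_apply, EmbeddingLike.apply_eq_iff_eq] at hb hd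
  exact ⟨hb.symm, hd.symm⟩

theorem IsOrbital.left_notMem {f₀ f₁ : Equiv.Perm ℝ} (h₀ : f₀ ∈ PL₀) (h₁ : f₁ ∈ PL₀)
    (hrel : ThompsonRel f₀ f₁) {a c b d : ℝ} (ho₀ : IsOrbital f₀ a c)
    (ho₁ : IsOrbital f₁ b d) : a ∉ Ioo b d := by
  intro ha
  obtain ⟨hb, hd⟩ := hrel.fixes_endpoints_of_mem h₀ h₁ ho₀.2.2.1 ho₁ ha
  obtain ⟨hc, hc'⟩ := hrel.commute_conj
  set p := f₀⁻¹ * (f₁⁻¹ * f₀) * f₀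
  have hp : p ∈ PL₀ := mul_mem (mul_mem (inv_mem h₀) (mul_mem (inv_mem h₁) h₀)) h₀
  have hpa : p a ≠ a := by
    simpa [p, Equiv.symm_apply_eq, ho₀.2.2.1] using (ho₁.apply_ne ha).symm
  have hop : IsOrbital p b d := by
    refine ⟨ho₁.1, fun x hx hpx => hpa ?_, by simp [p, hb, Equiv.symm_apply_eq, ho₁.2.2.1],
      by simp [p, hd, Equiv.symm_apply_eq, ho₁.2.2.2]⟩
    exact ho₁.eqOn_of_apply_eq (PL₀.strictMono h₁) hp (fun y _ => hc.perm_apply y) hx hpx ha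
  have hcomm : ∀ x ∈ Ioo b d, f₀ (p x) = p (f₀ x) := by
    have := ho₁.eqOn_of_eventually_nhdsLT (PL₀.strictMono h₁)
      (fun y _ => (hc.inv_left.mul_left hc').perm_apply y) ?_
    · intro x hx
      exact (by simpa [Equiv.symm_apply_eq] using this hx : p (f₀ x) = f₀ (p x)).symm
    · filter_upwards [PL₀.eventually_comm_nhdsLT h₀ hp hd hop.2.2.2] with x hx
      simp [← hx]
  obtain ⟨x, hx⟩ := nonempty_Ioo.2 (lt_min ho₀.1 ha.2)
  refine ho₀.apply_ne ⟨hx.1, hx.2.trans_le (min_le_left _ _)⟩ ?_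
  exact hop.eqOn_of_apply_eq (PL₀.strictMono hp) h₀ hcomm ha ho₀.2.2.1
    ⟨ha.1.trans hx.1, hx.2.trans_le (min_le_right _ _)⟩

theorem IsOrbital.right_notMem {f₀ f₁ : Equiv.Perm ℝ} (h₀ : f₀ ∈ PL₀) (h₁ : f₁ ∈ PL₀)
    (hrel : ThompsonRel f₀ f₁) {a c b d : ℝ} (ho₀ : IsOrbital f₀ a c)
    (ho₁ : IsOrbital f₁ b d) : c ∉ Ioo b d := by
  intro hc
  have hσ : StrictAnti (Equiv.subLeft (1 : ℝ)) := fun x y hxy => by simpa using hxy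
  refine (ho₀.conj_of_strictAnti hσ).left_notMem (PL₀.conj_subLeft h₀) (PL₀.conj_subLeft h₁)
    (hrel.conj _) (ho₁.conj_of_strictAnti hσ) ?_
  simpa [and_comm] using hc

/-- If `f₀, f₁ ∈ PL₀(I)` satisfy the two standard relations of Thompson's group `F`
and `A` is an orbital of `f₀`, then either `A` contains some orbital of `f₁`, or `A`
is disjoint from the support of `f₁`.  In particular no orbital of `f₀` is properly
contained in an orbital of `f₁`. -/
theorem orbital_contains_or_disjoint (f₀ f₁ : Equiv.Perm ℝ)
    (h₀ : IsPL0 f₀) (h₁ : IsPL0 f₁) (hrel : ThompsonRel f₀ f₁) (a c : ℝ)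
    (horb₀ : IsOrbital f₀ a c) :
    ((∃ b d : ℝ, IsOrbital f₁ b d ∧ Set.Ioo b d ⊆ Set.Ioo a c) ∨
      Disjoint (Set.Ioo a c) (Supp f₁)) ∧
    ∀ b d : ℝ, IsOrbital f₁ b d → ¬ Set.Ioo a c ⊂ Set.Ioo b d := by
  have hsub : ∀ {b d x}, IsOrbital f₁ b d → x ∈ Ioo a c → x ∈ Ioo b d → Ioo b d ⊆ Ioo a c :=
    fun ho₁ => Ioo_subset_Ioo_of_notMem (horb₀.left_notMem h₀ h₁ hrel ho₁)
      (horb₀.right_notMem h₀ h₁ hrel ho₁)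
  refine ⟨?_, fun b d ho₁ hss => ?_⟩
  · rcases (Ioo a c).disjoint_or_nonempty_inter (Supp f₁) with hdisj | ⟨x, hxA, hx₁⟩
    · exact Or.inr hdisj
    · obtain ⟨b, d, ho₁, hx⟩ := exists_isOrbital_of_mem_Supp h₁ hx₁
      exact Or.inl ⟨b, d, ho₁, hsub ho₁ hxA hx⟩
  · obtain ⟨x, hx⟩ := nonempty_Ioo.2 horb₀.1
    exact hss.2 (hsub ho₁ hx (hss.1 hx))
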